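/- For all n, (T_{2n+1} - 1)·T_{n+1} = T_n·T_{2n+2}, and both equal (L_{3n+2} - L_{n+2})/32, where T_0 = 0, T_1 = 1, T_n = 6T_{n-1} - T_{n-2} and L_0 = 2, L_1 = 6, L_n = 6L_{n-1} - L_{n-2}. -/
import Mathlib


def T : ℕ → ℤ
  | 0 => 0
  | 1 => 1
  | (n+2) => 6 * T (n+1) - T n

def L : ℕ → ℤ
  | 0 => 2
  | 1 => 6
  | (n+2) => 6 * L (n+1) - L n

lemma Trec (n : ℕ) : T (n+2) = 6 * T (n+1) - T n := rfl

lemma Lrec (n : ℕ) : L (n+2) = 6 * L (n+1) - L n := rfl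

lemma two_step {P : ℕ → Prop} (h0 : P 0) (h1 : P 1)
    (h : ∀ n, P n → P (n+1) → P (n+2)) : ∀ n, P n := by
  have key : ∀ n, P n ∧ P (n+1) := by
    intro n
    induction n with
    | zero => exact ⟨h0, h1⟩
    | succ k ih => exact ⟨ih.2, h k ih.1 ih.2⟩
  exact fun n => (key n).1

lemma Tadd (m : ℕ) : ∀ n, T (m+n+1) = T (m+1) * T (n+1) - T m * T n := by
  apply two_step
  · simp [T]
  · show T (m+2) = T (m+1) * T 2 - T m * T 1
    rw [Trec]
    norm_num [T]
    ring
  · intro k ih1 ih2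
    rw [show m+(k+1)+1 = m+k+2 by omega, show k+1+1 = k+2 by omega] at ih2
    rw [show m+(k+2)+1 = m+k+3 by omega, show k+2+1 = k+3 by omega]
    have t : T (m+k+3) = 6 * T (m+k+2) - T (m+k+1) := Trec (m+k+1)
    have t3 : T (k+3) = 6 * T (k+2) - T (k+1) := Trec (k+1)
    have t2 : T (k+2) = 6 * T (k+1) - T k := Trec k
    linear_combination t + 6 * ih2 - ih1 - T (m+1) * t3 + T m * t2

lemma cassini (n : ℕ) : T (n+1) * T (n+1) - T n * T (n+2) = 1 := by
  induction n with
  | zero => norm_num [T]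
  | succ k ih =>
    show T (k+2) * T (k+2) - T (k+1) * T (k+3) = 1
    have h3 : T (k+3) = 6 * T (k+2) - T (k+1) := Trec (k+1)
    have hc : T (k+2) = 6 * T (k+1) - T k := Trec k
    linear_combination ih + T (k+2) * hc - T (k+1) * h3

lemma Lrel : ∀ n, L (n+1) = T (n+2) - T n := by
  apply two_step
  · norm_num [T, L]
  · show L 2 = T 3 - T 1
    norm_num [T, L]
  · intro k ih1 ih2
    show L (k+3) = T (k+4) - T (k+2)
    rw [show k+1+1 = k+2 by omega, show k+1+2 = k+3 by omega] at ih2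
    have g1 : L (k+3) = 6 * L (k+2) - L (k+1) := Lrec (k+1)
    have g2 : T (k+4) = 6 * T (k+3) - T (k+2) := Trec (k+2)
    linear_combination g1 + 6 * ih2 - ih1 - g2 + Trec k

theorem stmt18 (n : ℕ) :
    (T (2*n+1) - 1) * T (n+1) = T n * T (2*n+2) ∧
    32 * ((T (2*n+1) - 1) * T (n+1)) = L (3*n+2) - L (n+2) := by
  have hT2 : T (n+2) = 6 * T (n+1) - T n := Trec n
  have hT3 : T (n+3) = 6 * T (n+2) - T (n+1) := Trec (n+1)
  have h2n1 : T (2*n+1) = T (n+1) * T (n+1) - T n * T n := by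
    have := Tadd n n; rwa [show n+n+1 = 2*n+1 by omega] at this
  have h2n2 : T (2*n+2) = T (n+2) * T (n+1) - T (n+1) * T n := by
    have := Tadd (n+1) n; rwa [show n+1+n+1 = 2*n+2 by omega] at this
  have h2n : T (2*n) = 6 * T (2*n+1) - T (2*n+2) := by
    have := Trec (2*n); linarith
  have h2n3 : T (2*n+3) = 6 * T (2*n+2) - T (2*n+1) := Trec (2*n+1)
  have h3n3 : T (3*n+3) = T (2*n+3) * T (n+1) - T (2*n+2) * T n := by
    have := Tadd (2*n+2) n; rwa [show 2*n+2+n+1 = 3*n+3 by omega] at this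
  have h3n1 : T (3*n+1) = T (2*n+1) * T (n+1) - T (2*n) * T n := by
    have := Tadd (2*n) n; rwa [show 2*n+n+1 = 3*n+1 by omega] at this
  have hL1 : L (3*n+2) = T (3*n+3) - T (3*n+1) := by
    have := Lrel (3*n+1); rwa [show 3*n+1+1 = 3*n+2 by omega, show 3*n+1+2 = 3*n+3 by omega] at this
  have hL2 : L (n+2) = T (n+3) - T (n+1) := by
    have := Lrel (n+1); rwa [show n+1+1 = n+2 by omega, show n+1+2 = n+3 by omega] at this
  have hc : T (n+1) * T (n+1) - T n * T (n+2) = 1 := cassini n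
  constructor
  · rw [h2n1, h2n2, hT2]
    rw [hT2] at hc
    linear_combination T (n+1) * hc
  · rw [hL1, hL2, h3n3, h3n1, h2n3, h2n, h2n2, h2n1, hT3, hT2]
    rw [hT2] at hc
    linear_combination (6 * T n - 2 * T (n+1)) * hc
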